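/- For a prime p ≡ 3 (mod 4) and r odd, the set R of pairs (v₃₅, v₄₅) with v₃₅ = a p^k, v₄₅ = b p^l (a, b ∈ ℤ_p^× ∪ {0}, 0 ≤ k, l < r) satisfying p^r ∣ v₃₅v₄₅, 2p^r ∣ v₃₅² ± v₄₅², and the coprimality conditions gcd(p^r, v₃₅, v₄₅, (v₃₅²+v₄₅²)/(2p^r)) = 1 = gcd(p^r, v₃₅, v₄₅, v₃₅v₄₅/p^r, (v₃₅²−v₄₅²)/(2p^r)), is empty; hence the SO(4,2) Kloosterman sum attached to s_α with odd modulus exponent r vanishes. -/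

import Mathlib

/-!
Write `v₃₅² + v₄₅² = 2 p^r c`. Since `ℤ_p` is local, the first coprimality condition says that
one of `p^r, v₃₅, v₄₅, c` is a unit. As `-1` is not a square mod `p`, `p ∣ x² + y²` forces
`p ∣ x` and `p ∣ y`; hence neither `v₃₅` nor `v₄₅` is a unit, and by descent a sum of two
squares in `ℤ_p` has even valuation, so `c` is not a unit either because `r` is odd.
-/

open IsLocalRing

theorem IsLocalRing.exists_isUnit_of_span_eq_top {R : Type*} [CommRing R] [IsLocalRing R]
    {s : Set R} (hs : Ideal.span s = ⊤) : ∃ z ∈ s, IsUnit z := by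
  by_contra! h
  refine (maximalIdeal.isMaximal R).ne_top (top_le_iff.1 ?_)
  exact hs ▸ Ideal.span_le.2 fun z hz => (mem_maximalIdeal z).2 (h z hz)

namespace PadicInt

variable {p : ℕ} [Fact p.Prime]

theorem natCast_p_ne_zero : (p : ℤ_[p]) ≠ 0 :=
  Nat.cast_ne_zero.2 (Fact.out : p.Prime).ne_zero

theorem p_dvd_iff_toZMod_eq_zero {z : ℤ_[p]} : (p : ℤ_[p]) ∣ z ↔ toZMod z = 0 := by
  rw [← Ideal.mem_span_singleton, ← maximalIdeal_eq_span_p, ← ker_toZMod, RingHom.mem_ker]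

theorem isUnit_iff_not_p_dvd {z : ℤ_[p]} : IsUnit z ↔ ¬ (p : ℤ_[p]) ∣ z := by
  rw [← norm_lt_one_iff_dvd, not_lt, isUnit_iff, (norm_le_one z).ge_iff_eq]

theorem isUnit_natCast_iff {n : ℕ} : IsUnit (n : ℤ_[p]) ↔ ¬ p ∣ n := by
  rw [isUnit_iff_not_p_dvd, p_dvd_iff_toZMod_eq_zero, map_natCast, ZMod.natCast_eq_zero_iff]

theorem p_dvd_of_p_dvd_sq_add_sq (hp4 : p % 4 = 3) {x y : ℤ_[p]}
    (h : (p : ℤ_[p]) ∣ x ^ 2 + y ^ 2) : (p : ℤ_[p]) ∣ x := by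
  by_contra hx
  rw [p_dvd_iff_toZMod_eq_zero, map_add, map_pow, map_pow] at h
  rw [p_dvd_iff_toZMod_eq_zero] at hx
  exact ZMod.mod_four_ne_three_of_sq_eq_neg_sq' hx (eq_neg_of_add_eq_zero_right h) hp4

theorem exists_sq_add_sq_eq_p_sq_mul (hp4 : p % 4 = 3) {x y : ℤ_[p]}
    (h : (p : ℤ_[p]) ∣ x ^ 2 + y ^ 2) :
    ∃ x' y' : ℤ_[p], x ^ 2 + y ^ 2 = (p : ℤ_[p]) ^ 2 * (x' ^ 2 + y' ^ 2) := by
  have hy : (p : ℤ_[p]) ∣ y := p_dvd_of_p_dvd_sq_add_sq hp4 (add_comm (x ^ 2) _ ▸ h)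
  obtain ⟨x', rfl⟩ := p_dvd_of_p_dvd_sq_add_sq hp4 h
  obtain ⟨y', rfl⟩ := hy
  exact ⟨x', y', by ring⟩

theorem even_of_sq_add_sq_eq_p_pow_mul_unit (hp4 : p % 4 = 3) :
    ∀ {n : ℕ} {x y u : ℤ_[p]}, IsUnit u → x ^ 2 + y ^ 2 = (p : ℤ_[p]) ^ n * u → Even n
  | 0, _, _, _, _, _ => .zero
  | 1, x, y, u, hu, h => by
    obtain ⟨x', y', hxy⟩ := exists_sq_add_sq_eq_p_sq_mul hp4 ⟨u, by rw [h, pow_one]⟩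
    refine absurd ⟨x' ^ 2 + y' ^ 2, ?_⟩ (isUnit_iff_not_p_dvd.1 hu)
    refine mul_left_cancel₀ natCast_p_ne_zero ?_
    linear_combination h.symm.trans hxy
  | n + 2, x, y, u, hu, h => by
    obtain ⟨x', y', hxy⟩ := exists_sq_add_sq_eq_p_sq_mul hp4 ⟨p ^ (n + 1) * u, by rw [h]; ring⟩
    refine (even_of_sq_add_sq_eq_p_pow_mul_unit hp4 hu (x := x') (y := y') ?_).add even_two
    refine mul_left_cancel₀ (pow_ne_zero 2 natCast_p_ne_zero) ?_
    linear_combination hxy.symm.trans h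

end PadicInt

theorem so42_alpha_parameter_set_empty_odd_r_general (p : ℕ) [Fact p.Prime]
    (hp4 : p % 4 = 3) (r : ℕ) (hodd : Odd r) :
    ¬ ∃ (a b c d e : ℤ_[p]) (k l : ℕ),
      (IsUnit a ∨ a = 0) ∧ (IsUnit b ∨ b = 0) ∧ k < r ∧ l < r ∧
      (a * (p : ℤ_[p]) ^ k) ^ 2 + (b * (p : ℤ_[p]) ^ l) ^ 2
        = 2 * (p : ℤ_[p]) ^ r * c ∧
      (a * (p : ℤ_[p]) ^ k) * (b * (p : ℤ_[p]) ^ l) = (p : ℤ_[p]) ^ r * d ∧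
      (a * (p : ℤ_[p]) ^ k) ^ 2 - (b * (p : ℤ_[p]) ^ l) ^ 2
        = 2 * (p : ℤ_[p]) ^ r * e ∧
      Ideal.span ({(p : ℤ_[p]) ^ r, a * (p : ℤ_[p]) ^ k,
        b * (p : ℤ_[p]) ^ l, c} : Set ℤ_[p]) = ⊤ ∧
      Ideal.span ({(p : ℤ_[p]) ^ r, a * (p : ℤ_[p]) ^ k,
        b * (p : ℤ_[p]) ^ l, d, e} : Set ℤ_[p]) = ⊤ := by
  rintro ⟨a, b, c, -, -, k, l, -, -, -, -, hsum, -, -, hspan, -⟩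
  generalize a * (p : ℤ_[p]) ^ k = x at hsum hspan
  generalize b * (p : ℤ_[p]) ^ l = y at hsum hspan
  have hr : r ≠ 0 := hodd.pos.ne'
  have hp_dvd : (p : ℤ_[p]) ∣ x ^ 2 + y ^ 2 :=
    hsum ▸ ((dvd_pow_self _ hr).mul_left 2).mul_right c
  have h2 : IsUnit (2 : ℤ_[p]) := by
    refine mod_cast PadicInt.isUnit_natCast_iff.2 fun h => ?_
    have := Nat.le_of_dvd two_pos h
    omega
  obtain ⟨z, hz, hzu⟩ := exists_isUnit_of_span_eq_top hspan
  simp only [Set.mem_insert_iff, Set.mem_singleton_iff] at hz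
  rcases hz with rfl | rfl | rfl | rfl
  · exact PadicInt.p_nonunit ((isUnit_pow_iff hr).1 hzu)
  · exact PadicInt.isUnit_iff_not_p_dvd.1 hzu
      (PadicInt.p_dvd_of_p_dvd_sq_add_sq hp4 hp_dvd)
  · exact PadicInt.isUnit_iff_not_p_dvd.1 hzu
      (PadicInt.p_dvd_of_p_dvd_sq_add_sq hp4 (add_comm (x ^ 2) _ ▸ hp_dvd))
  · exact Nat.not_even_iff_odd.2 hodd
      (PadicInt.even_of_sq_add_sq_eq_p_pow_mul_unit hp4 (h2.mul hzu) (hsum.trans (by ring)))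

/-- For a prime `p ≡ 3 (mod 4)` and odd `r > 0`, the Plücker parameter set for the
`SO(4,2)` Weyl element `s_α` is empty: there are no `v₃₅ = a·p^k`, `v₄₅ = b·p^l`
(`a, b ∈ ℤ_p^× ∪ {0}`, `0 ≤ k, l < r`) with `p^r ∣ v₃₅v₄₅` (quotient `d`),
`2p^r ∣ v₃₅² ± v₄₅²` (quotients `c`, `e`), and
`gcd(p^r, v₃₅, v₄₅, (v₃₅²+v₄₅²)/(2p^r)) = 1
  = gcd(p^r, v₃₅, v₄₅, v₃₅v₄₅/p^r, (v₃₅²−v₄₅²)/(2p^r))`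
(phrased as the corresponding ideals of `ℤ_p` being the unit ideal).  Hence the
`SO(4,2)` Kloosterman sum attached to `s_α` with odd modulus exponent vanishes. -/
theorem so42_alpha_parameter_set_empty_odd_r (p : ℕ) [Fact p.Prime]
    (hp4 : p % 4 = 3) (r : ℕ) (hr : 0 < r) (hodd : Odd r) :
    ¬ ∃ (a b c d e : ℤ_[p]) (k l : ℕ),
      (IsUnit a ∨ a = 0) ∧ (IsUnit b ∨ b = 0) ∧ k < r ∧ l < r ∧
      (a * (p : ℤ_[p]) ^ k) ^ 2 + (b * (p : ℤ_[p]) ^ l) ^ 2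
        = 2 * (p : ℤ_[p]) ^ r * c ∧
      (a * (p : ℤ_[p]) ^ k) * (b * (p : ℤ_[p]) ^ l) = (p : ℤ_[p]) ^ r * d ∧
      (a * (p : ℤ_[p]) ^ k) ^ 2 - (b * (p : ℤ_[p]) ^ l) ^ 2
        = 2 * (p : ℤ_[p]) ^ r * e ∧
      Ideal.span ({(p : ℤ_[p]) ^ r, a * (p : ℤ_[p]) ^ k,
        b * (p : ℤ_[p]) ^ l, c} : Set ℤ_[p]) = ⊤ ∧
      Ideal.span ({(p : ℤ_[p]) ^ r, a * (p : ℤ_[p]) ^ k,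
        b * (p : ℤ_[p]) ^ l, d, e} : Set ℤ_[p]) = ⊤ :=
  so42_alpha_parameter_set_empty_odd_r_general p hp4 r hodd
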